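/- arXiv:0809.0788 — 10 statements merged into one kernel-verified Lean document; each statement's English description precedes it below -/
import Mathlib

section
/- Let B be a σ-structure with finitely many pp-definable binary relations. Then for every element b ∈ B, the expansion [B, {b}] of B by the unary relation {b} has finitely many pp-definable unary relations. -/
/-- A relational signature: a set of relation symbols, each with an arity. -/
structure RelSig where
  symbols : Type
  arity : symbols → ℕ

/-- A relational structure over a signature `σ`. -/
structure RelStruct (σ : RelSig) where
  carrier : Type
  rel : (R : σ.symbols) → Set (Fin (σ.arity R) → carrier)

/-- `h` is a homomorphism from `A` to `B`. -/
def IsHom {σ : RelSig} (A B : RelStruct σ) (h : A.carrier → B.carrier) : Prop :=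
  ∀ (R : σ.symbols) (t : Fin (σ.arity R) → A.carrier),
    t ∈ A.rel R → (fun i => h (t i)) ∈ B.rel R

/-- `A → B`: there exists a homomorphism from `A` to `B`. -/
def HomTo {σ : RelSig} (A B : RelStruct σ) : Prop := ∃ h, IsHom A B h

/-- The power structure `℘(B)`: universe the nonempty subsets of `B`, with
`R^{℘(B)} = {(π₁ S, …, π_k S) : S ⊆ R^B, S ≠ ∅}`. -/
def PowStruct {σ : RelSig} (B : RelStruct σ) : RelStruct σ where
  carrier := {S : Set B.carrier // S.Nonempty}
  rel R := {t | ∃ S : Set (Fin (σ.arity R) → B.carrier), S.Nonempty ∧ S ⊆ B.rel R ∧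
    ∀ i, (t i).val = (fun s => s i) '' S}

/-- The instance `(A, B)` has the peek arc consistency condition: for every `a ∈ A`
there is a homomorphism `h : A → ℘(B)` with `h a` a singleton. -/
def PACC {σ : RelSig} (A B : RelStruct σ) : Prop :=
  ∀ a : A.carrier, ∃ h : A.carrier → (PowStruct B).carrier,
    IsHom A (PowStruct B) h ∧ ∃ b, (h a).val = {b}

/-- Peek arc consistency decides `CSP(B)`: every finite instance with the PACC
homomorphically maps to `B`. -/
def PACdecides {σ : RelSig} (B : RelStruct σ) : Prop :=
  ∀ A : RelStruct σ, Finite A.carrier → PACC A B → HomTo A B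

/-- The induced substructure of `℘(B)^n` on the tuples having at least one
singleton coordinate. -/
def IndPow {σ : RelSig} (B : RelStruct σ) (n : ℕ) : RelStruct σ where
  carrier := {v : Fin n → (PowStruct B).carrier // ∃ j : Fin n, ∃ b, (v j).val = {b}}
  rel R := {t | ∀ j : Fin n, (fun i => (t i).val j) ∈ (PowStruct B).rel R}

/-- The induced substructure of `B` with universe `C`. -/
def InducedOn {σ : RelSig} (B : RelStruct σ) (C : Set B.carrier) : RelStruct σ where
  carrier := C
  rel R := {t | (fun i => ((t i) : B.carrier)) ∈ B.rel R}

/-- Primitive positive formulas over `σ` with free variables from `V`. -/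
inductive PP (σ : RelSig) : Type → Type 1 where
  | atom {V : Type} (R : σ.symbols) (v : Fin (σ.arity R) → V) : PP σ V
  | conj {V : Type} : PP σ V → PP σ V → PP σ V
  | ex {V : Type} : PP σ (Option V) → PP σ V

/-- Satisfaction of a pp-formula in a structure under an assignment. -/
def PP.Sat {σ : RelSig} (B : RelStruct σ) : {V : Type} → PP σ V → (V → B.carrier) → Prop
  | _, .atom R v, α => (fun i => α (v i)) ∈ B.rel R
  | _, .conj φ ψ, α => PP.Sat B φ α ∧ PP.Sat B ψ α
  | _, .ex φ, α => ∃ b, PP.Sat B φ (fun x => Option.elim x b α)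

/-- A `k`-ary relation is pp-definable in `B`. -/
def PPDefinable {σ : RelSig} (B : RelStruct σ) {k : ℕ} (R : Set (Fin k → B.carrier)) : Prop :=
  ∃ φ : PP σ (Fin k), R = {t | PP.Sat B φ t}

/-- Expand a signature by one new symbol of arity `k`. -/
def RelSig.addSym (σ : RelSig) (k : ℕ) : RelSig :=
  ⟨σ.symbols ⊕ Unit, Sum.elim σ.arity fun _ => k⟩

/-- Expand a structure by one new relation of arity `k`. -/
def RelStruct.expandOne {σ : RelSig} (B : RelStruct σ) (k : ℕ)
    (T : Set (Fin k → B.carrier)) : RelStruct (σ.addSym k) where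
  carrier := B.carrier
  rel R := match R with
    | .inl r => B.rel r
    | .inr _ => T

/-- Disjoint union of two signatures. -/
def RelSig.sum (σ τ : RelSig) : RelSig :=
  ⟨σ.symbols ⊕ τ.symbols, Sum.elim σ.arity τ.arity⟩

/-- Expand a structure by a family of new relations indexed by a second signature. -/
def RelStruct.expandMany {σ τ : RelSig} (B : RelStruct σ)
    (extra : (S : τ.symbols) → Set (Fin (τ.arity S) → B.carrier)) :
    RelStruct (σ.sum τ) where
  carrier := B.carrier
  rel R := match R with
    | .inl r => B.rel r
    | .inr s => extra s

/-- A ternary operation `f` is a polymorphism of `B`. -/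
def IsPolymorphism3 {σ : RelSig} (B : RelStruct σ)
    (f : B.carrier → B.carrier → B.carrier → B.carrier) : Prop :=
  ∀ (R : σ.symbols) (t₁ t₂ t₃ : Fin (σ.arity R) → B.carrier),
    t₁ ∈ B.rel R → t₂ ∈ B.rel R → t₃ ∈ B.rel R →
      (fun i => f (t₁ i) (t₂ i) (t₃ i)) ∈ B.rel R

/-- A ternary operation is a slice-semilattice operation: every slice `⊕_b = f (·, ·, b)`
is associative, commutative, and idempotent. -/
def IsSliceSemilattice {B : Type} (f : B → B → B → B) : Prop :=
  ∀ b : B,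
    (∀ x y z, f (f x y b) z b = f x (f y z b) b) ∧
    (∀ x y, f x y b = f y x b) ∧
    (∀ x, f x x b = x)

/-- The signature with three binary relation symbols (for 2-SAT). -/
@[reducible] def sig3 : RelSig := ⟨Fin 3, fun _ => 2⟩

/-- The 2-SAT structure: universe `{0,1}` with the three relations
`{0,1}² \ {(0,0)}`, `{0,1}² \ {(0,1)}`, `{0,1}² \ {(1,1)}`. -/
@[reducible] def twoSat : RelStruct sig3 where
  carrier := Fin 2
  rel R := match R with
    | ⟨0, _⟩ => {t | ¬(t 0 = 0 ∧ t 1 = 0)}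
    | ⟨1, _⟩ => {t | ¬(t 0 = 0 ∧ t 1 = 1)}
    | ⟨2, _⟩ => {t | ¬(t 0 = 1 ∧ t 1 = 1)}

/-- The signature with a single binary relation symbol. -/
@[reducible] def graphSig : RelSig := ⟨Unit, fun _ => 2⟩

/-- Cyclic successor on `Fin n`. -/
def cycSucc {n : ℕ} (hn : 0 < n) (i : Fin n) : Fin n :=
  ⟨(i.val + 1) % n, Nat.mod_lt _ hn⟩

/-- The signature with two binary relation symbols (for `(ℚ; ≤, ≠)`). -/
@[reducible] def sig2 : RelSig := ⟨Fin 2, fun _ => 2⟩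

/-- The structure `(ℚ; ≤, ≠)`. -/
@[reducible] def ratStruct : RelStruct sig2 where
  carrier := ℚ
  rel R := match R with
    | ⟨0, _⟩ => {t | t 0 ≤ t 1}
    | ⟨1, _⟩ => {t | t 0 ≠ t 1}

/-! A `U`-atom `U(x)` of `[B, {b}]` only says `x = b`. Treat `b` as a parameter, i.e. an extra
free variable `y` of a pp-formula over `B` that is set to `b`, and replace every variable
occurring in a `U`-atom by `y`. Free variables pinned this way stay as side conditions
`x = b`, so a `k`-ary relation pp-definable in `[B, {b}]` is `{t | t i = b for i ∈ E}`
intersected with the section at `y = b` of a `(k+1)`-ary relation pp-definable in `B`.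
There are only finitely many choices for either part. -/

namespace PP

variable {σ : RelSig}

def rename : {V W : Type} → (V → W) → PP σ V → PP σ W
  | _, _, f, .atom R v => .atom R (f ∘ v)
  | _, _, f, .conj φ ψ => .conj (rename f φ) (rename f ψ)
  | _, _, f, .ex φ => .ex (rename (Option.map f) φ)

theorem sat_rename (B : RelStruct σ) :
    ∀ {V W : Type} (f : V → W) (φ : PP σ V) (α : W → B.carrier),
      PP.Sat B (φ.rename f) α ↔ PP.Sat B φ (α ∘ f)
  | _, _, _, .atom _ _, _ => Iff.rfl
  | _, _, f, .conj φ ψ, α => and_congr (sat_rename B f φ α) (sat_rename B f ψ α)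
  | _, _, f, .ex φ, α => exists_congr fun c => by
      rw [sat_rename B (Option.map f) φ]
      congr! 1
      funext x
      cases x <;> rfl

theorem forall_mem_merge_conj_sat (B : RelStruct σ) {V : Type} (ψ₁ ψ₂ : Option (PP σ V))
    (α : V → B.carrier) :
    (∀ χ ∈ Option.merge PP.conj ψ₁ ψ₂, PP.Sat B χ α) ↔
      (∀ χ ∈ ψ₁, PP.Sat B χ α) ∧ ∀ χ ∈ ψ₂, PP.Sat B χ α := by
  cases ψ₁ <;> cases ψ₂ <;> simp [PP.Sat]

end PP

section Singleton

variable {σ : RelSig} (B : RelStruct σ) (b : B.carrier)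

/-- The variable `none` is the parameter standing for `b`, and `ψ = none` encodes the empty
conjunction, which is not a pp-formula. -/
theorem PP.exists_sat_expandOne_singleton_iff :
    ∀ {V : Type} (φ : PP (σ.addSym 1) V), ∃ (E : Set V) (ψ : Option (PP σ (Option V))),
      ∀ α : V → B.carrier, PP.Sat (B.expandOne 1 {t | t 0 = b}) φ α ↔
        (∀ v ∈ E, α v = b) ∧ ∀ χ ∈ ψ, PP.Sat B χ (fun o => o.elim b α)
  | _, .atom (.inl R) v =>
      ⟨∅, some (.atom R (some ∘ v)), fun _ => by simp [PP.Sat, RelStruct.expandOne]; rfl⟩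
  | _, .atom (.inr ()) v =>
      ⟨{v (0 : Fin 1)}, none, fun _ => by simp [PP.Sat, RelStruct.expandOne]; rfl⟩
  | _, .conj φ₁ φ₂ => by
      obtain ⟨E₁, ψ₁, h₁⟩ := PP.exists_sat_expandOne_singleton_iff φ₁
      obtain ⟨E₂, ψ₂, h₂⟩ := PP.exists_sat_expandOne_singleton_iff φ₂
      refine ⟨E₁ ∪ E₂, Option.merge PP.conj ψ₁ ψ₂, fun α => ?_⟩
      simp only [PP.Sat, h₁, h₂, PP.forall_mem_merge_conj_sat, Set.mem_union, or_imp,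
        forall_and]
      tauto
  | _, .ex φ => by
      obtain ⟨E, ψ, h⟩ := PP.exists_sat_expandOne_singleton_iff φ
      by_cases hE : none ∈ E
      · refine ⟨some ⁻¹' E, ψ.map (PP.rename Option.join), fun α => ?_⟩
        have hjoin : (fun o => o.elim b α) ∘ Option.join =
            fun o => o.elim b fun x => x.elim b α := by
          funext o; rcases o with _ | _ | _ <;> rfl
        refine (exists_congr fun c => h _).trans ?_
        simp only [Option.forall_mem_map, PP.sat_rename, hjoin]
        constructor
        · rintro ⟨c, hc, hψ⟩
          have hcb : c = b := hc none hE
          exact ⟨fun v hv => hc (some v) hv, hcb ▸ hψ⟩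
        · rintro ⟨hE', hψ⟩
          exact ⟨b, Option.forall.2 ⟨fun _ => rfl, hE'⟩, hψ⟩
      · refine ⟨some ⁻¹' E,
          ψ.map fun χ => .ex (χ.rename fun o => o.elim (some none) (Option.map some)),
          fun α => ?_⟩
        have hswap : ∀ c, (fun x : Option (Option _) => x.elim c fun o => o.elim b α) ∘
            (fun o : Option (Option _) => o.elim (some none) (Option.map some)) =
            fun o => o.elim b fun x => x.elim c α := by
          intro c; funext o; rcases o with _ | _ | _ <;> rfl
        have hpin : ∀ c, (∀ v ∈ E, v.elim c α = b) ↔ ∀ v ∈ some ⁻¹' E, α v = b := fun c =>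
          ⟨fun hc v hv => hc (some v) hv,
            fun hα => Option.forall.2 ⟨fun h => absurd h hE, hα⟩⟩
        have : Nonempty B.carrier := ⟨b⟩
        refine (exists_congr fun c => (h _).trans (and_congr_left' (hpin c))).trans ?_
        rw [exists_and_left]
        simp only [Option.forall_mem_map, PP.Sat, PP.sat_rename, hswap]
        cases ψ <;> simp

theorem PPDefinable.exists_eq_of_expandOne_singleton {k : ℕ} {R : Set (Fin k → B.carrier)}
    (hR : PPDefinable (B.expandOne 1 {t | t 0 = b}) R) :
    ∃ E : Set (Fin k),
      ∃ S ∈ insert Set.univ {S : Set (Fin (k + 1) → B.carrier) | PPDefinable B S},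
        R = {t | ∀ i ∈ E, t i = b} ∩ (fun t => Fin.snoc t b) ⁻¹' S := by
  obtain ⟨φ, rfl⟩ := hR
  obtain ⟨E, ψ, h⟩ := PP.exists_sat_expandOne_singleton_iff B b φ
  have hsnoc : ∀ t : Fin k → B.carrier,
      (Fin.snoc t b : Fin (k + 1) → B.carrier) ∘ finSuccEquivLast.symm =
        fun o => o.elim b t := by
    intro t; funext o; cases o <;> simp [finSuccEquivLast_symm_some]
  refine ⟨E, ψ.elim Set.univ fun χ => {s | PP.Sat B (χ.rename finSuccEquivLast.symm) s},
    ?_, ?_⟩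
  · cases ψ
    · exact Set.mem_insert _ _
    · exact Set.mem_insert_of_mem _ ⟨_, rfl⟩
  · ext (t : Fin k → B.carrier)
    refine (h t).trans ?_
    cases ψ <;> simp [PP.sat_rename, hsnoc] <;> exact Iff.rfl

theorem finite_ppDefinable_expandOne_singleton {k : ℕ}
    (hB : {S : Set (Fin (k + 1) → B.carrier) | PPDefinable B S}.Finite) :
    {R : Set (Fin k → B.carrier) | PPDefinable (B.expandOne 1 {t | t 0 = b}) R}.Finite := by
  refine (Set.finite_univ.image2
    (fun (E : Set (Fin k)) S => {t | ∀ i ∈ E, t i = b} ∩ (fun t => Fin.snoc t b) ⁻¹' S)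
    (hB.insert Set.univ)).subset ?_
  intro R hR
  obtain ⟨E, S, hS, rfl⟩ := hR.exists_eq_of_expandOne_singleton B b
  exact Set.mem_image2_of_mem (Set.mem_univ E) hS

end Singleton

theorem expansion_finitely_many_pp_unary_general {σ : RelSig} (B : RelStruct σ)
    (hbin : {R : Set (Fin 2 → B.carrier) | PPDefinable B R}.Finite) (b : B.carrier) :
    {R : Set (Fin 1 → B.carrier) |
      PPDefinable (B.expandOne 1 {t | t 0 = b}) R}.Finite :=
  finite_ppDefinable_expandOne_singleton B b hbin

/-- If `B` has finitely many pp-definable binary relations, then for every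
`b ∈ B` the expansion `[B, {b}]` of `B` by the unary relation `{b}` has finitely many
pp-definable unary relations. -/
theorem expansion_finitely_many_pp_unary {σ : RelSig} [Finite σ.symbols] (B : RelStruct σ)
    (hbin : {R : Set (Fin 2 → B.carrier) | PPDefinable B R}.Finite) (b : B.carrier) :
    {R : Set (Fin 1 → B.carrier) |
      PPDefinable (B.expandOne 1 {t | t 0 = b}) R}.Finite :=
  expansion_finitely_many_pp_unary_general B hbin b
end

section
/- Let B be a σ-structure such that PAC decides CSP(B). Let R, S ∈ σ both have arity k, and let B' be the expansion of B by one new k-ary relation symbol T interpreted as T^{B'} = R^B ∩ S^B. Then PAC decides CSP(B'). -/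
/-!
Replace every `T`-constraint `T(x)` of an instance of `CSP(B')` by the atoms `R(x)` and `S(x)`.
The resulting instance of `CSP(B)` has the same homomorphisms to `B` as the original one has to
`B'`, and it inherits the PACC: a witness `h : A → ℘(B')` is also a homomorphism into `℘(B)`,
because a nonempty set of tuples in `T^B ⊆ R^B ∩ S^B` witnesses both projected constraints.
The same argument works for any relation defined by a conjunction of atoms.
-/

/-- The atom `r(x_{f 0}, …, x_{f (n-1)})` over the variables `Fin k`, encoded as `⟨r, f⟩`. -/
abbrev RelSig.Atom (σ : RelSig) (k : ℕ) : Type := Σ r : σ.symbols, Fin (σ.arity r) → Fin k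

namespace RelStruct

variable {σ : RelSig} {k : ℕ} {ι : Type}

def conjAtoms (B : RelStruct σ) (φ : ι → σ.Atom k) : Set (Fin k → B.carrier) :=
  {t | ∀ j, (fun i => t ((φ j).2 i)) ∈ B.rel (φ j).1}

/-- Each `T`-fact `T(t)` of `A` becomes the facts `r(t ∘ f)` for the atoms `⟨r, f⟩` of `φ`; the
equation in the sigma type avoids casting `u` along `r = (φ j).1`. -/
def unfoldAtoms (A : RelStruct (σ.addSym k)) (φ : ι → σ.Atom k) : RelStruct σ where
  carrier := A.carrier
  rel r := {u | u ∈ A.rel (.inl r) ∨ ∃ j, ∃ t ∈ A.rel (.inr ()),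
    (⟨r, u⟩ : Σ r : σ.symbols, Fin (σ.arity r) → A.carrier) = ⟨(φ j).1, fun i => t ((φ j).2 i)⟩}

theorem isHom_expandOne_of_isHom_unfoldAtoms {A : RelStruct (σ.addSym k)} {B : RelStruct σ}
    {φ : ι → σ.Atom k} {h : A.carrier → B.carrier} (hh : IsHom (A.unfoldAtoms φ) B h) :
    IsHom A (B.expandOne k (B.conjAtoms φ)) h := by
  rintro (r | ⟨⟩) t ht
  · exact hh r t (Or.inl ht)
  · exact fun j => hh _ _ (Or.inr ⟨j, t, ht, rfl⟩)

theorem powStruct_rel_atom_of_subset_conjAtoms {B : RelStruct σ} {φ : ι → σ.Atom k}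
    {p : Fin k → (PowStruct B).carrier} {W : Set (Fin k → B.carrier)} (hW : W.Nonempty)
    (hWφ : W ⊆ B.conjAtoms φ) (hp : ∀ i, (p i).val = (fun s => s i) '' W) (j : ι) :
    (fun i => p ((φ j).2 i)) ∈ (PowStruct B).rel (φ j).1 := by
  refine ⟨(fun s i => s ((φ j).2 i)) '' W, hW.image _, ?_, fun i => ?_⟩
  · rintro _ ⟨s, hs, rfl⟩
    exact hWφ hs j
  · rw [hp, Set.image_image]

theorem isHom_unfoldAtoms_powStruct {A : RelStruct (σ.addSym k)} {B : RelStruct σ}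
    {φ : ι → σ.Atom k} {h : A.carrier → (PowStruct B).carrier}
    (hh : IsHom A (PowStruct (B.expandOne k (B.conjAtoms φ))) h) :
    IsHom (A.unfoldAtoms φ) (PowStruct B) h := by
  rintro r u (hu | ⟨j, t, ht, hu⟩)
  · exact hh (.inl r) u hu
  · cases hu
    obtain ⟨W, hW, hWφ, hp⟩ := hh (.inr ()) t ht
    exact powStruct_rel_atom_of_subset_conjAtoms (B := B) hW hWφ hp j

theorem PACC.unfoldAtoms {A : RelStruct (σ.addSym k)} {B : RelStruct σ} {φ : ι → σ.Atom k}
    (hA : PACC A (B.expandOne k (B.conjAtoms φ))) : PACC (A.unfoldAtoms φ) B := by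
  intro a
  obtain ⟨h, hh, hsingle⟩ := hA a
  exact ⟨h, isHom_unfoldAtoms_powStruct hh, hsingle⟩

theorem PACdecides.expandOne_conjAtoms {B : RelStruct σ} (hB : PACdecides B)
    (φ : ι → σ.Atom k) : PACdecides (B.expandOne k (B.conjAtoms φ)) := by
  intro A hfin hA
  obtain ⟨h, hh⟩ := hB (A.unfoldAtoms φ) hfin (PACC.unfoldAtoms hA)
  exact ⟨h, isHom_expandOne_of_isHom_unfoldAtoms hh⟩

end RelStruct

theorem PAC_expand_intersection_general {σ : RelSig} (B : RelStruct σ)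
    (hB : PACdecides B) (R S : σ.symbols) (hRS : σ.arity S = σ.arity R) :
    PACdecides (B.expandOne (σ.arity R)
      {t | t ∈ B.rel R ∧ (fun i => t (Fin.cast hRS i)) ∈ B.rel S}) := by
  have hT : {t | t ∈ B.rel R ∧ (fun i => t (Fin.cast hRS i)) ∈ B.rel S} =
      B.conjAtoms ![⟨R, id⟩, ⟨S, Fin.cast hRS⟩] := by
    ext
    simp only [RelStruct.conjAtoms, Set.mem_ofPred_eq, Fin.forall_fin_two]
    rfl
  rw [hT]
  exact RelStruct.PACdecides.expandOne_conjAtoms hB _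

/-- If PAC decides `CSP(B)`, then PAC decides the CSP of the expansion of `B`
by one new symbol `T` interpreted as the intersection `R^B ∩ S^B` of two relations of the
same arity. -/
theorem PAC_expand_intersection {σ : RelSig} [Finite σ.symbols] (B : RelStruct σ)
    (hB : PACdecides B) (R S : σ.symbols) (hRS : σ.arity S = σ.arity R) :
    PACdecides (B.expandOne (σ.arity R)
      {t | t ∈ B.rel R ∧ (fun i => t (Fin.cast hRS i)) ∈ B.rel S}) :=
  PAC_expand_intersection_general B hB R S hRS
end

section
/- Let B be a σ-structure such that PAC decides CSP(B). Let R ∈ σ have arity k, and let B' be the expansion of B by one new (k+1)-ary relation symbol T interpreted as T^{B'} = R^B × B. Then PAC decides CSP(B'). -/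
/-! Write `B'` for the expansion of `B` by the relation `T = {t | t ∘ f ∈ R^B}`, for an arbitrary
map `f` of coordinates (for the theorem, `f = Fin.castSucc`). An instance `A'` of `CSP(B')` is
turned into an instance of `CSP(B)` on the same universe by replacing each `T`-constraint `t` with
the `R`-constraint `t ∘ f`. The PACC passes from `(A', B')` to this instance, since a witness set
`S ⊆ T` for a `T`-constraint yields the witness set `{s ∘ f | s ∈ S} ⊆ R^B`, and every
homomorphism of the new instance to `B` is one of `A'` to `B'`. -/

namespace RelStruct

variable {σ : RelSig} {m : ℕ}

def minorRel (B : RelStruct σ) (R : σ.symbols) (f : Fin (σ.arity R) → Fin m) :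
    Set (Fin m → B.carrier) :=
  {t | (fun i => t (f i)) ∈ B.rel R}

def minorReduct (A : RelStruct (σ.addSym m)) (R : σ.symbols) (f : Fin (σ.arity R) → Fin m) :
    RelStruct σ where
  carrier := A.carrier
  rel r := A.rel (.inl r) ∪
    {u | ∃ e : R = r, ∃ t ∈ A.rel (.inr ()), u = e ▸ fun i => t (f i)}

variable {R : σ.symbols} {f : Fin (σ.arity R) → Fin m}

theorem comp_mem_minorReduct_rel {A : RelStruct (σ.addSym m)} {t : Fin m → A.carrier}
    (ht : t ∈ A.rel (.inr ())) : (fun i => t (f i)) ∈ (A.minorReduct R f).rel R :=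
  Or.inr ⟨rfl, t, ht, rfl⟩

theorem comp_mem_powStruct_rel {B : RelStruct σ}
    {t : Fin m → (PowStruct (B.expandOne m (B.minorRel R f))).carrier}
    (ht : t ∈ (PowStruct (B.expandOne m (B.minorRel R f))).rel (.inr ())) :
    (fun i => t (f i)) ∈ (PowStruct B).rel R := by
  obtain ⟨S : Set (Fin m → B.carrier), hS, hST, hproj⟩ := ht
  refine ⟨(fun s i => s (f i)) '' S, hS.image _, ?_, fun i => ?_⟩
  · rintro _ ⟨s, hs, rfl⟩
    exact hST hs
  · change (t (f i)).val = _
    rw [Set.image_image]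
    exact hproj (f i)

theorem isHom_minorReduct_powStruct {A : RelStruct (σ.addSym m)} {B : RelStruct σ}
    {h : A.carrier → (PowStruct B).carrier}
    (hh : IsHom A (PowStruct (B.expandOne m (B.minorRel R f))) h) :
    IsHom (A.minorReduct R f) (PowStruct B) h := by
  rintro r u (hu | ⟨rfl, t, ht, rfl⟩)
  · exact hh (.inl r) u hu
  · exact comp_mem_powStruct_rel (hh (.inr ()) t ht)

theorem pacc_minorReduct {A : RelStruct (σ.addSym m)} {B : RelStruct σ}
    (hA : PACC A (B.expandOne m (B.minorRel R f))) : PACC (A.minorReduct R f) B := by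
  intro a
  obtain ⟨h, hh, hsingleton⟩ := hA a
  exact ⟨h, isHom_minorReduct_powStruct hh, hsingleton⟩

theorem isHom_expandOne_of_isHom_minorReduct {A : RelStruct (σ.addSym m)} {B : RelStruct σ}
    {g : A.carrier → B.carrier} (hg : IsHom (A.minorReduct R f) B g) :
    IsHom A (B.expandOne m (B.minorRel R f)) g := by
  rintro (r | ⟨⟩) t ht
  · exact hg r t (Or.inl ht)
  · exact hg R _ (comp_mem_minorReduct_rel ht)

theorem pacDecides_expandOne_minorRel {B : RelStruct σ} (hB : PACdecides B) :
    PACdecides (B.expandOne m (B.minorRel R f)) := by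
  intro A hfin hA
  obtain ⟨g, hg⟩ := hB (A.minorReduct R f) hfin (pacc_minorReduct hA)
  exact ⟨g, isHom_expandOne_of_isHom_minorReduct hg⟩

end RelStruct

theorem PAC_expand_product_with_univ_general {σ : RelSig} (B : RelStruct σ)
    (hB : PACdecides B) (R : σ.symbols) :
    PACdecides (B.expandOne (σ.arity R + 1)
      {t | (fun i : Fin (σ.arity R) => t i.castSucc) ∈ B.rel R}) :=
  RelStruct.pacDecides_expandOne_minorRel (f := Fin.castSucc) hB

/-- If PAC decides `CSP(B)`, then PAC decides the CSP of the expansion of `B`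
by one new `(k+1)`-ary symbol `T` interpreted as `R^B × B`, where `R` has arity `k`. -/
theorem PAC_expand_product_with_univ {σ : RelSig} [Finite σ.symbols] (B : RelStruct σ)
    (hB : PACdecides B) (R : σ.symbols) :
    PACdecides (B.expandOne (σ.arity R + 1)
      {t | (fun i : Fin (σ.arity R) => t i.castSucc) ∈ B.rel R}) :=
  PAC_expand_product_with_univ_general B hB R
end

section
/- Let B be a σ-structure such that PAC decides CSP(B), and let B' be the expansion of B by one new binary relation symbol T interpreted as the equality relation T^{B'} = {(b, b) : b ∈ B}. Then PAC decides CSP(B'). -/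
/-!
Collapse every `T`-edge of an instance `A` of `CSP(B')`: the quotient `A / T` is an instance of
`CSP(B)`. In `℘(B')` the relation `T` is again equality (of subsets), so every homomorphism
`A → ℘(B')` factors through `A / T`, and the PACC passes from `(A, B')` to `(A / T, B)`.
Conversely a homomorphism `A / T → B`, precomposed with the quotient map, sends `T`-edges to
equal elements, i.e. it is a homomorphism `A → B'`.
-/

theorem IsHom.comp {σ : RelSig} {A B C : RelStruct σ} {g : B.carrier → C.carrier}
    {f : A.carrier → B.carrier} (hg : IsHom B C g) (hf : IsHom A B f) : IsHom A C (g ∘ f) :=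
  fun R t ht => hg R _ (hf R t ht)

namespace RelStruct

variable {σ : RelSig}

abbrev withEquality (B : RelStruct σ) : RelStruct (σ.addSym 2) :=
  B.expandOne 2 {t | t 0 = t 1}

def EqEdge (A : RelStruct (σ.addSym 2)) (a a' : A.carrier) : Prop :=
  ∃ t ∈ A.rel (Sum.inr ()), t (0 : Fin 2) = a ∧ t (1 : Fin 2) = a'

def eqQuotient (A : RelStruct (σ.addSym 2)) : RelStruct σ where
  carrier := Quot A.EqEdge
  rel R := {t | ∃ t' ∈ A.rel (Sum.inl R), ∀ i, Quot.mk _ (t' i) = t i}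

instance finite_eqQuotient (A : RelStruct (σ.addSym 2)) [Finite A.carrier] :
    Finite A.eqQuotient.carrier :=
  Finite.of_surjective (Quot.mk _) Quot.exists_rep

theorem isHom_id_powStruct_withEquality (B : RelStruct σ) :
    IsHom (PowStruct B.withEquality) (PowStruct B).withEquality id := by
  rintro (R | ⟨⟩) t ⟨S, hS, hSsub, hproj⟩
  · exact ⟨S, hS, hSsub, hproj⟩
  · have hdiag : ∀ s ∈ S, s (0 : Fin 2) = s (1 : Fin 2) := fun s hs => hSsub hs
    apply Subtype.ext
    change (t (0 : Fin 2)).val = (t (1 : Fin 2)).val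
    rw [hproj (0 : Fin 2), hproj (1 : Fin 2)]
    ext b
    constructor <;> rintro ⟨s, hs, rfl⟩
    exacts [⟨s, hs, (hdiag s hs).symm⟩, ⟨s, hs, hdiag s hs⟩]

end RelStruct

open RelStruct

variable {σ : RelSig} {A : RelStruct (σ.addSym 2)} {C : RelStruct σ}

theorem IsHom.eq_of_eqEdge {h : A.carrier → C.carrier} (hh : IsHom A C.withEquality h)
    {a a' : A.carrier} (haa' : A.EqEdge a a') : h a = h a' := by
  obtain ⟨t, ht, rfl, rfl⟩ := haa'
  exact hh (Sum.inr ()) t ht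

theorem IsHom.eqQuotient_lift {h : A.carrier → C.carrier} (hh : IsHom A C.withEquality h) :
    IsHom A.eqQuotient C (Quot.lift h fun _ _ => hh.eq_of_eqEdge) := by
  rintro R t ⟨t', ht', ht't⟩
  obtain rfl : (fun i => Quot.mk _ (t' i)) = t := funext ht't
  exact hh (Sum.inl R) t' ht'

theorem PACC.eqQuotient {B : RelStruct σ} (hA : PACC A B.withEquality) :
    PACC A.eqQuotient B := by
  intro x
  obtain ⟨a, rfl⟩ := Quot.exists_rep x
  obtain ⟨h, hh, b, hb⟩ := hA a
  exact ⟨_, ((isHom_id_powStruct_withEquality B).comp hh).eqQuotient_lift, b, hb⟩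

theorem HomTo.of_eqQuotient (hA : HomTo A.eqQuotient C) : HomTo A C.withEquality := by
  obtain ⟨g, hg⟩ := hA
  refine ⟨g ∘ Quot.mk _, ?_⟩
  rintro (R | ⟨⟩) t ht
  · exact hg R _ ⟨t, ht, fun _ => rfl⟩
  · exact congrArg g (Quot.sound ⟨t, ht, rfl, rfl⟩)

theorem PAC_expand_equality_general {σ : RelSig} (B : RelStruct σ)
    (hB : PACdecides B) :
    PACdecides (B.expandOne 2 {t | t 0 = t 1}) := fun A _ hA =>
  HomTo.of_eqQuotient (hB A.eqQuotient inferInstance hA.eqQuotient)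

/-- If PAC decides `CSP(B)`, then PAC decides the CSP of the expansion of `B`
by one new binary symbol `T` interpreted as the equality relation `{(b, b) : b ∈ B}`. -/
theorem PAC_expand_equality {σ : RelSig} [Finite σ.symbols] (B : RelStruct σ)
    (hB : PACdecides B) :
    PACdecides (B.expandOne 2 {t | t 0 = t 1}) :=
  PAC_expand_equality_general B hB
end

section
/- Let B and B' be σ-structures that are homomorphically equivalent, i.e., B → B' and B' → B. If PAC decides CSP(B), then PAC decides CSP(B'). -/
theorem HomTo.trans {σ : RelSig} {A B C : RelStruct σ} (hAB : HomTo A B) (hBC : HomTo B C) :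
    HomTo A C :=
  let ⟨f, hf⟩ := hAB
  let ⟨g, hg⟩ := hBC
  ⟨g ∘ f, hg.comp hf⟩

def PowStruct.map {σ : RelSig} {B B' : RelStruct σ} (g : B'.carrier → B.carrier) :
    (PowStruct B').carrier → (PowStruct B).carrier :=
  fun S => ⟨g '' S.val, S.prop.image g⟩

theorem IsHom.powStruct_map {σ : RelSig} {B B' : RelStruct σ} {g : B'.carrier → B.carrier}
    (hg : IsHom B' B g) : IsHom (PowStruct B') (PowStruct B) (PowStruct.map g) := by
  rintro R t ⟨S, hSne, hSsub, hproj⟩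
  refine ⟨(fun s i => g (s i)) '' S, hSne.image _, ?_, fun i => ?_⟩
  · rintro _ ⟨s, hs, rfl⟩
    exact hg R s (hSsub hs)
  · simp only [PowStruct.map, hproj i, Set.image_image]

theorem PACC.of_homTo {σ : RelSig} {A B B' : RelStruct σ} (hA : PACC A B') (hB' : HomTo B' B) :
    PACC A B := by
  obtain ⟨g, hg⟩ := hB'
  intro a
  obtain ⟨h, hh, b, hb⟩ := hA a
  refine ⟨PowStruct.map g ∘ h, hg.powStruct_map.comp hh, g b, ?_⟩
  simp only [Function.comp_apply, PowStruct.map, hb, Set.image_singleton]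

theorem PAC_hom_equivalent_general {σ : RelSig} (B B' : RelStruct σ)
    (h1 : HomTo B B') (h2 : HomTo B' B) (hB : PACdecides B) :
    PACdecides B' :=
  fun A hfin hA => (hB A hfin (hA.of_homTo h2)).trans h1

/-- If `B` and `B'` are homomorphically equivalent and PAC decides `CSP(B)`,
then PAC decides `CSP(B')`. -/
theorem PAC_hom_equivalent {σ : RelSig} [Finite σ.symbols] (B B' : RelStruct σ)
    (h1 : HomTo B B') (h2 : HomTo B' B) (hB : PACdecides B) :
    PACdecides B' :=
  PAC_hom_equivalent_general B B' h1 h2 hB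
end

section
/- PAC decides CSP(B) for the 2-SAT structure B, i.e., the structure with universe {0, 1} and binary relations R_{(0,0)}^B = {0,1}² \ {(0,0)}, R_{(0,1)}^B = {0,1}² \ {(0,1)}, and R_{(1,1)}^B = {0,1}² \ {(1,1)}: for every finite structure A over this signature, if (A, B) has the PACC then A → B. -/
/-
Two homomorphisms `h₁ h₂ : A → ℘(B)` can be merged into a homomorphism that agrees with `h₁`
where `h₁` is a singleton and with `h₂` elsewhere, provided that in every (binary) relation of `B`
each value either determines its partner or is compatible with every partner; on a two-element
domain this holds for every binary relation. Merging the homomorphisms granted by the PACC for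
all elements of `A` gives a homomorphism `A → ℘(B)` taking only singleton values, that is, a
homomorphism `A → B`.
-/

open Set

abbrev RelSig.binary (Sym : Type) : RelSig := ⟨Sym, fun _ => 2⟩

def relFiber {β : Type} (R : Set (Fin 2 → β)) (i j : Fin 2) (a : β) : Set β :=
  (fun t => t j) '' {t ∈ R | t i = a}

def FibersSubsingletonOrUniv {β : Type} (R : Set (Fin 2 → β)) : Prop :=
  ∀ i j : Fin 2, i ≠ j → ∀ a, (relFiber R i j a).Subsingleton ∨ relFiber R i j a = univ

lemma Set.subsingleton_or_eq_univ_of_card_le_two {β : Type} [Finite β] (hβ : Nat.card β ≤ 2)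
    (s : Set β) : s.Subsingleton ∨ s = univ := by
  refine s.subsingleton_or_nontrivial.imp_right fun ⟨x, hx, y, hy, hxy⟩ => ?_
  have hpair : ({x, y} : Set β) = univ :=
    eq_of_subset_of_ncard_le (subset_univ _) (by rwa [ncard_univ, ncard_pair hxy])
  exact eq_univ_of_univ_subset (hpair ▸ insert_subset hx (singleton_subset_iff.mpr hy))

lemma fibersSubsingletonOrUniv_of_card_le_two {β : Type} [Finite β] (hβ : Nat.card β ≤ 2)
    (R : Set (Fin 2 → β)) : FibersSubsingletonOrUniv R :=
  fun _ _ _ _ => subsingleton_or_eq_univ_of_card_le_two hβ _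

lemma fin_two_eq_or_eq_of_ne {i j : Fin 2} (hij : i ≠ j) (k : Fin 2) : k = i ∨ k = j := by
  omega

lemma homTo_of_isHom_powStruct {σ : RelSig} {A B : RelStruct σ}
    {H : A.carrier → (PowStruct B).carrier} (hH : IsHom A (PowStruct B) H)
    (hs : ∀ a, (H a).val.Subsingleton) : HomTo A B := by
  refine ⟨fun a => (H a).2.some, fun R t ht => ?_⟩
  obtain ⟨S, ⟨s, hs_mem⟩, hSR, hproj⟩ := hH R t ht
  have hst : (fun i => (H (t i)).2.some) = s := funext fun i =>
    hs (t i) (H (t i)).2.some_mem (by rw [hproj i]; exact ⟨s, hs_mem, rfl⟩)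
  exact hst ▸ hSR hs_mem

section Merge

variable {Sym : Type} {A B : RelStruct (RelSig.binary Sym)}

lemma mem_powStruct_rel_of_relFiber_eq_univ {R : Sym} {i j : Fin 2} (hij : i ≠ j)
    {e : B.carrier} (hfull : relFiber (B.rel R) i j e = univ)
    {v : Fin 2 → (PowStruct B).carrier} (hvi : (v i).val = {e}) :
    v ∈ (PowStruct B).rel R := by
  set S := {t ∈ B.rel R | t i = e ∧ t j ∈ (v j).val}
  have hS : ∀ q ∈ (v j).val, ∃ t ∈ S, t i = e ∧ t j = q := fun q hq => by
    obtain ⟨t, ⟨htR, hti⟩, rfl⟩ := hfull.symm ▸ mem_univ q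
    exact ⟨t, ⟨htR, hti, hq⟩, hti, rfl⟩
  obtain ⟨q, hq⟩ := (v j).2
  obtain ⟨t, htS, hti, -⟩ := hS q hq
  refine ⟨S, ⟨t, htS⟩, fun t ht => ht.1, fun k => ?_⟩
  rcases fin_two_eq_or_eq_of_ne hij k with rfl | rfl
  · rw [hvi, eq_comm, eq_singleton_iff_unique_mem]
    refine ⟨⟨t, htS, hti⟩, ?_⟩
    rintro _ ⟨s, ⟨-, hsi, -⟩, rfl⟩
    exact hsi
  · ext q
    constructor
    · intro hq
      obtain ⟨t, htS, -, htj⟩ := hS q hq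
      exact ⟨t, htS, htj⟩
    · rintro ⟨s, ⟨-, -, hsj⟩, rfl⟩
      exact hsj

lemma mem_powStruct_rel_of_subsingleton {R : Sym} (hR : FibersSubsingletonOrUniv (B.rel R))
    {i j : Fin 2} (hij : i ≠ j) {u : Fin 2 → (PowStruct B).carrier}
    (hu : u ∈ (PowStruct B).rel R) (hi : (u i).val.Subsingleton)
    (hj : ¬(u j).val.Subsingleton) {v : Fin 2 → (PowStruct B).carrier} (hvi : v i = u i) :
    v ∈ (PowStruct B).rel R := by
  obtain ⟨S, -, hSR, hproj⟩ := hu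
  obtain ⟨e, he⟩ := (u i).2.exists_eq_singleton_or_nontrivial.resolve_right hi.not_nontrivial
  have hpartners : (u j).val ⊆ relFiber (B.rel R) i j e := by
    rw [hproj j]
    rintro _ ⟨s, hs, rfl⟩
    have hsi : s i ∈ (u i).val := by rw [hproj i]; exact ⟨s, hs, rfl⟩
    rw [he] at hsi
    exact ⟨s, ⟨hSR hs, hsi⟩, rfl⟩
  have hfull := (hR i j hij e).resolve_left fun h => hj (h.anti hpartners)
  exact mem_powStruct_rel_of_relFiber_eq_univ hij hfull (hvi ▸ he)

open Classical in
noncomputable def mergeHom (h₁ h₂ : A.carrier → (PowStruct B).carrier) :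
    A.carrier → (PowStruct B).carrier :=
  fun x => if (h₁ x).val.Subsingleton then h₁ x else h₂ x

lemma mergeHom_subsingleton {h₁ h₂ : A.carrier → (PowStruct B).carrier} {x : A.carrier}
    (hx : (h₁ x).val.Subsingleton ∨ (h₂ x).val.Subsingleton) :
    (mergeHom h₁ h₂ x).val.Subsingleton := by
  unfold mergeHom
  split_ifs with h
  exacts [h, hx.resolve_left h]

lemma isHom_mergeHom (hB : ∀ R, FibersSubsingletonOrUniv (B.rel R))
    {h₁ h₂ : A.carrier → (PowStruct B).carrier}
    (H₁ : IsHom A (PowStruct B) h₁) (H₂ : IsHom A (PowStruct B) h₂) :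
    IsHom A (PowStruct B) (mergeHom h₁ h₂) := by
  intro R t ht
  by_cases s0 : (h₁ (t 0)).val.Subsingleton <;> by_cases s1 : (h₁ (t 1)).val.Subsingleton
  · convert H₁ R t ht using 1
    funext k
    fin_cases k <;> simp [mergeHom, s0, s1]
  · exact mem_powStruct_rel_of_subsingleton (hB R) Fin.zero_ne_one (H₁ R t ht) s0 s1
      (by simp [mergeHom, s0])
  · exact mem_powStruct_rel_of_subsingleton (hB R) Fin.zero_ne_one.symm (H₁ R t ht) s1 s0
      (by simp [mergeHom, s1])
  · convert H₂ R t ht using 1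
    funext k
    fin_cases k <;> simp [mergeHom, s0, s1]

lemma exists_isHom_powStruct_subsingleton_on (hB : ∀ R, FibersSubsingletonOrUniv (B.rel R))
    (hpacc : PACC A B) {H₀ : A.carrier → (PowStruct B).carrier}
    (hH₀ : IsHom A (PowStruct B) H₀) (s : Finset A.carrier) :
    ∃ H, IsHom A (PowStruct B) H ∧ ∀ a ∈ s, (H a).val.Subsingleton := by
  classical
  induction s using Finset.induction_on with
  | empty => exact ⟨H₀, hH₀, by simp⟩
  | insert a s _ ih =>
    obtain ⟨H, hH, hs⟩ := ih
    obtain ⟨h, hh, b, hb⟩ := hpacc a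
    refine ⟨mergeHom h H, isHom_mergeHom hB hh hH, fun x hx => mergeHom_subsingleton ?_⟩
    rcases Finset.mem_insert.mp hx with rfl | hxs
    · exact .inl (hb ▸ subsingleton_singleton)
    · exact .inr (hs x hxs)

theorem pacDecides_of_fibersSubsingletonOrUniv
    (hB : ∀ R, FibersSubsingletonOrUniv (B.rel R)) : PACdecides B := by
  intro A hfin hpacc
  rcases isEmpty_or_nonempty A.carrier with hA | ⟨⟨a⟩⟩
  · exact ⟨isEmptyElim, fun _ t _ => isEmptyElim (t 0)⟩
  have := Fintype.ofFinite A.carrier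
  obtain ⟨H₀, hH₀, -⟩ := hpacc a
  obtain ⟨H, hH, hs⟩ := exists_isHom_powStruct_subsingleton_on hB hpacc hH₀ Finset.univ
  exact homTo_of_isHom_powStruct hH fun a => hs a (Finset.mem_univ a)

end Merge

/-- PAC decides `CSP(B)` for the 2-SAT structure `B`. -/
theorem PAC_decides_twoSat : PACdecides twoSat :=
  pacDecides_of_fibersSubsingletonOrUniv fun _ =>
    fibersSubsingletonOrUniv_of_card_le_two (by simp) _
end

section
/- Let G be an undirected bipartite graph, regarded as a structure over the signature {E} with E binary. Then PAC decides CSP(G): for every finite structure A over the signature {E}, if (A, G) has the PACC then A → G. -/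
/-!
A homomorphism `h : A → ℘(G)` propagates the sides of the bipartition along edges: if `h x`
lies within one side of `G`, then `h y` lies within the other side for every neighbour `y` of
`x`. Peeking at a root of each connected component of `A` makes `h` one-sided at the root,
hence on the whole component, and the side of `h x` is then a proper 2-colouring of `A`.
A 2-coloured `A` maps onto any edge of `G` taken in both directions, and `G` has an edge as
soon as `A` does.
-/

theorem PowStruct.subset_of_mem_rel {σ : RelSig} {B : RelStruct σ} {R : σ.symbols}
    {t : Fin (σ.arity R) → (PowStruct B).carrier} (ht : t ∈ (PowStruct B).rel R)
    {i j : Fin (σ.arity R)} {P Q : Set B.carrier}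
    (hPQ : ∀ s ∈ B.rel R, s i ∈ P → s j ∈ Q) (hP : (t i).val ⊆ P) : (t j).val ⊆ Q := by
  obtain ⟨S, -, hSR, hproj⟩ := ht
  rw [hproj i, Set.image_subset_iff] at hP
  rw [hproj j]
  rintro _ ⟨s, hs, rfl⟩
  exact hPQ s (hSR hs) (hP hs)

theorem PowStruct.rel_nonempty_of_mem {σ : RelSig} {B : RelStruct σ} {R : σ.symbols}
    {t : Fin (σ.arity R) → (PowStruct B).carrier} (ht : t ∈ (PowStruct B).rel R) :
    (B.rel R).Nonempty := by
  obtain ⟨S, ⟨s, hs⟩, hSR, -⟩ := ht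
  exact ⟨s, hSR hs⟩

namespace RelStruct

variable {A G : RelStruct graphSig}

def gaifmanGraph (A : RelStruct graphSig) : SimpleGraph A.carrier :=
  SimpleGraph.fromRel fun x y => ∃ t ∈ A.rel (), t 0 = x ∧ t 1 = y

theorem gaifmanGraph_reachable_of_mem_rel {t : Fin 2 → A.carrier} (ht : t ∈ A.rel ()) :
    A.gaifmanGraph.Reachable (t 0) (t 1) := by
  by_cases heq : t 0 = t 1
  · rw [heq]
  · exact SimpleGraph.Adj.reachable ⟨heq, .inl ⟨t, ht, rfl, rfl⟩⟩

def IsTwoColoring (A : RelStruct graphSig) (c : A.carrier → Bool) : Prop :=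
  ∀ t ∈ A.rel (), c (t 0) ≠ c (t 1)

theorem IsTwoColoring.homTo {col : A.carrier → Bool} (hcol : A.IsTwoColoring col)
    {s : Fin 2 → G.carrier} (hs : s ∈ G.rel ()) (hs' : ![s 1, s 0] ∈ G.rel ()) : HomTo A G := by
  refine ⟨fun x => cond (col x) (s 1) (s 0), fun _ t ht => ?_⟩
  convert_to ![cond (col (t 0)) (s 1) (s 0), cond (col (t 1)) (s 1) (s 0)] ∈ G.rel ()
  · ext i; fin_cases i <;> rfl
  rw [Bool.eq_not.mpr (hcol t ht).symm]
  cases col (t 0)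
  · convert hs using 1; ext i; fin_cases i <;> rfl
  · exact hs'

end RelStruct

namespace IsHom

variable {A G : RelStruct graphSig} {c : G.carrier → Bool} {h : A.carrier → (PowStruct G).carrier}

theorem subset_preimage_not_iff_of_mem_rel (hh : IsHom A (PowStruct G) h)
    (hc : G.IsTwoColoring c) {t : Fin 2 → A.carrier} (ht : t ∈ A.rel ()) (i : Bool) :
    (h (t 0)).val ⊆ c ⁻¹' {i} ↔ (h (t 1)).val ⊆ c ⁻¹' {!i} := by
  constructor <;> refine PowStruct.subset_of_mem_rel (hh () t ht) fun s hs hsi => ?_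
  · rw [Set.mem_preimage, Set.mem_singleton_iff] at hsi ⊢
    exact Bool.eq_not.mpr (hsi ▸ (hc s hs).symm)
  · rw [Set.mem_preimage, Set.mem_singleton_iff] at hsi ⊢
    rw [← Bool.not_not i, ← hsi]
    exact Bool.eq_not.mpr (hc s hs)

theorem exists_subset_preimage_of_reachable (hh : IsHom A (PowStruct G) h)
    (hc : G.IsTwoColoring c) {a x : A.carrier} (hax : A.gaifmanGraph.Reachable a x)
    {i : Bool} (ha : (h a).val ⊆ c ⁻¹' {i}) : ∃ j, (h x).val ⊆ c ⁻¹' {j} := by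
  rw [SimpleGraph.reachable_iff_reflTransGen] at hax
  induction hax with
  | refl => exact ⟨i, ha⟩
  | tail _ hyz ih =>
    obtain ⟨j, hj⟩ := ih
    obtain ⟨-, ⟨t, ht, rfl, rfl⟩ | ⟨t, ht, rfl, rfl⟩⟩ := hyz
    · exact ⟨!j, (hh.subset_preimage_not_iff_of_mem_rel hc ht j).mp hj⟩
    · exact ⟨!j, (hh.subset_preimage_not_iff_of_mem_rel hc ht (!j)).mpr (by rwa [Bool.not_not])⟩

end IsHom

theorem PACC.exists_isTwoColoring {A G : RelStruct graphSig} (hA : PACC A G)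
    {c : G.carrier → Bool} (hc : G.IsTwoColoring c) : ∃ col, A.IsTwoColoring col := by
  choose H hH hpeek using hA
  let root (x : A.carrier) : A.carrier := (A.gaifmanGraph.connectedComponentMk x).out
  have hroot (x : A.carrier) : A.gaifmanGraph.Reachable (root x) x :=
    SimpleGraph.ConnectedComponent.exact (Quot.out_eq _)
  refine ⟨fun x => c (H (root x) x).2.some, fun t ht => ?_⟩
  have hsame : root (t 1) = root (t 0) := by
    simp only [root,
      SimpleGraph.ConnectedComponent.sound (RelStruct.gaifmanGraph_reachable_of_mem_rel ht)]
  obtain ⟨b, hb⟩ := hpeek (root (t 0))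
  obtain ⟨j, hj⟩ := (hH _).exists_subset_preimage_of_reachable hc (hroot (t 0))
    (hb.subset.trans (Set.singleton_subset_iff.mpr rfl) : _ ⊆ c ⁻¹' {c b})
  have hj' := ((hH _).subset_preimage_not_iff_of_mem_rel hc ht j).mp hj
  simp only [hsame]
  rw [hj (H _ _).2.some_mem, hj' (H _ _).2.some_mem]
  exact (Bool.not_ne_self j).symm

theorem PAC_decides_bipartite_general (G : RelStruct graphSig)
    (hsym : ∀ t ∈ G.rel (), ![t 1, t 0] ∈ G.rel ())
    (V₀ V₁ : Set G.carrier) (hdisj : V₀ ∩ V₁ = ∅)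
    (hbip : ∀ t ∈ G.rel (), (t 0 ∈ V₀ ∧ t 1 ∈ V₁) ∨ (t 0 ∈ V₁ ∧ t 1 ∈ V₀)) :
    PACdecides G := by
  classical
  intro A _ hA
  have hV (g : G.carrier) (h₀ : g ∈ V₀) : g ∉ V₁ := fun h₁ => hdisj.subset ⟨h₀, h₁⟩
  have hc : G.IsTwoColoring fun g => decide (g ∈ V₁) := by
    intro s hs
    rcases hbip s hs with ⟨h₀, h₁⟩ | ⟨h₁, h₀⟩ <;> simp [h₁, hV _ h₀]
  obtain ⟨col, hcol⟩ := hA.exists_isTwoColoring hc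
  by_cases hE : (A.rel ()).Nonempty
  · obtain ⟨t, ht⟩ := hE
    obtain ⟨s, hs⟩ := PowStruct.rel_nonempty_of_mem ((hA (t 0)).choose_spec.1 () t ht)
    exact hcol.homTo hs (hsym s hs)
  · exact ⟨fun a => ((hA a).choose a).2.some, fun _ t ht => (hE ⟨t, ht⟩).elim⟩

/-- If `G` is an undirected bipartite graph, then PAC decides `CSP(G)`. -/
theorem PAC_decides_bipartite (G : RelStruct graphSig) (hfin : Finite G.carrier)
    (hsym : ∀ t ∈ G.rel (), ![t 1, t 0] ∈ G.rel ())
    (V₀ V₁ : Set G.carrier) (hdisj : V₀ ∩ V₁ = ∅) (hcover : V₀ ∪ V₁ = Set.univ)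
    (hbip : ∀ t ∈ G.rel (), (t 0 ∈ V₀ ∧ t 1 ∈ V₁) ∨ (t 0 ∈ V₁ ∧ t 1 ∈ V₀)) :
    PACdecides G :=
  PAC_decides_bipartite_general G hsym V₀ V₁ hdisj hbip
end

section
/- Let D be an unbalanced orientation of a cycle, regarded as a structure over the signature {A} with A binary. Then PAC decides CSP(D): for every finite structure C over the signature {A}, if (C, D) has the PACC then C → D. -/
/-! Suppose `f : B × ℘(B) → B` is a homomorphism with `f (b, {c}) = c`. Then two
homomorphisms `g, h : A → ℘(B)` merge into `x ↦ {f (c, g x) : c ∈ h x}`, which is singleton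
wherever `g` or `h` is. Merging the PACC homomorphisms over all elements of a finite `A` gives a
homomorphism into `℘(B)` with only singleton values, that is, a homomorphism into `B`.

For an unbalanced oriented cycle, such a fold comes from the universal cover: the infinite
oriented path on `ℤ` with its height function, which shifts by the nonzero winding number `q`
along each deck transformation. Given a base vertex `b` of height `β`, each vertex of `D` has a
unique lift with height in `[β, β + |q|)`, and `f b U` is the element of `U` whose lift is least
in the lexicographic order of (height, position). Edges of the path join consecutive positions
and raise the height by one, which makes these lexicographic minima adjacent. -/

open Function Finset

section PeekFold

variable {σ : RelSig}

/-- `(b, U) ↦ f b U` is a homomorphism `B × ℘(B) → B` sending `(b, {c})` to `c`. -/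
structure IsPeekFold (B : RelStruct σ) (f : B.carrier → Set B.carrier → B.carrier) : Prop where
  singleton : ∀ b c, f b {c} = c
  map_rel : ∀ (R : σ.symbols) (t : Fin (σ.arity R) → B.carrier), t ∈ B.rel R →
    ∀ S : Set (Fin (σ.arity R) → B.carrier), S.Nonempty → S ⊆ B.rel R →
      (fun i => f (t i) ((fun s => s i) '' S)) ∈ B.rel R

variable {A B : RelStruct σ}

theorem homTo_of_forall_singleton {g : A.carrier → (PowStruct B).carrier}
    (hg : IsHom A (PowStruct B) g) (hs : ∀ x, ∃ c, (g x).val = {c}) : HomTo A B := by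
  choose c hc using hs
  refine ⟨c, fun R t ht => ?_⟩
  obtain ⟨S, ⟨w, hw⟩, hSR, hproj⟩ := hg R t ht
  suffices (fun i => c (t i)) = w from this ▸ hSR hw
  funext i
  have hmem : w i ∈ (g (t i)).val := by rw [hproj i]; exact ⟨w, hw, rfl⟩
  rw [hc (t i)] at hmem
  exact hmem.symm

def combine (f : B.carrier → Set B.carrier → B.carrier)
    (g h : A.carrier → (PowStruct B).carrier) : A.carrier → (PowStruct B).carrier :=
  fun x => ⟨(fun c => f c (g x).val) '' (h x).val, (h x).2.image _⟩

variable {f : B.carrier → Set B.carrier → B.carrier}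

theorem IsPeekFold.isHom_combine (hf : IsPeekFold B f)
    {g h : A.carrier → (PowStruct B).carrier}
    (hg : IsHom A (PowStruct B) g) (hh : IsHom A (PowStruct B) h) :
    IsHom A (PowStruct B) (combine f g h) := by
  intro R t ht
  obtain ⟨Sg, hSg, hSgR, hgproj⟩ := hg R t ht
  obtain ⟨Sh, hSh, hShR, hhproj⟩ := hh R t ht
  refine ⟨(fun τ i => f (τ i) ((fun s => s i) '' Sg)) '' Sh, hSh.image _, ?_, fun i => ?_⟩
  · rintro _ ⟨τ, hτ, rfl⟩
    exact hf.map_rel R τ (hShR hτ) Sg hSg hSgR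
  · simp only [combine, hgproj i, hhproj i, Set.image_image]

theorem IsPeekFold.combine_val_of_left (hf : IsPeekFold B f)
    {g h : A.carrier → (PowStruct B).carrier} {x : A.carrier} {c : B.carrier}
    (hc : (g x).val = {c}) : (combine f g h x).val = {c} := by
  simp only [combine, hc, hf.singleton]
  exact (h x).2.image_const c

theorem combine_val_of_right {g h : A.carrier → (PowStruct B).carrier} {x : A.carrier}
    {d : B.carrier} (hd : (h x).val = {d}) : (combine f g h x).val = {f d (g x).val} := by
  simp only [combine, hd, Set.image_singleton]

theorem IsPeekFold.exists_isHom_singleton_on (hf : IsPeekFold B f) (hpacc : PACC A B)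
    {s : Finset A.carrier} (hs : s.Nonempty) :
    ∃ g, IsHom A (PowStruct B) g ∧ ∀ a ∈ s, ∃ c, (g a).val = {c} := by
  induction hs using Finset.Nonempty.cons_induction with
  | singleton a =>
    obtain ⟨h, hh, c, hc⟩ := hpacc a
    exact ⟨h, hh, by simpa using ⟨c, hc⟩⟩
  | cons a s _ _ ih =>
    obtain ⟨g, hg, hgs⟩ := ih
    obtain ⟨h, hh, d, hd⟩ := hpacc a
    refine ⟨combine f g h, hf.isHom_combine hg hh, ?_⟩
    simp only [Finset.mem_cons, forall_eq_or_imp]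
    refine ⟨⟨_, combine_val_of_right hd⟩, fun b hb => ?_⟩
    obtain ⟨c, hc⟩ := hgs b hb
    exact ⟨c, hf.combine_val_of_left hc⟩

theorem IsPeekFold.homTo (hf : IsPeekFold B f) [Finite A.carrier] [Nonempty A.carrier]
    (hpacc : PACC A B) : HomTo A B := by
  have := Fintype.ofFinite A.carrier
  obtain ⟨g, hg, hgs⟩ := hf.exists_isHom_singleton_on hpacc Finset.univ_nonempty
  exact homTo_of_forall_singleton hg fun x => hgs x (Finset.mem_univ x)

end PeekFold

theorem adj_of_lex_minimal {V : Type*} {Adj : V → V → Prop} {H₀ I₀ H₁ I₁ : V → ℤ}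
    (hI₀ : Injective I₀) (hI₁ : Injective I₁) (hpar : ∀ x, 2 ∣ H₀ x - I₀ x)
    (hstep : ∀ x y, Adj x y → H₁ y = H₀ x + 1 ∧ (I₁ y = I₀ x + 1 ∨ I₁ y = I₀ x - 1))
    {x p r y : V} (hxp : Adj x p) (hry : Adj r y)
    (hxr : toLex (H₀ x, I₀ x) ≤ toLex (H₀ r, I₀ r))
    (hyp : toLex (H₁ y, I₁ y) ≤ toLex (H₁ p, I₁ p)) : Adj x y := by
  rw [Prod.Lex.toLex_le_toLex] at hxr hyp
  obtain ⟨hHp, hIp⟩ := hstep x p hxp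
  obtain ⟨hHy, hIy⟩ := hstep r y hry
  obtain ⟨a, ha⟩ := hpar x
  obtain ⟨b, hb⟩ := hpar r
  -- equal heights and equal parities leave no room between the two positions
  have : I₀ x = I₀ r ∨ I₁ y = I₁ p := by omega
  rcases this with h | h
  · exact hI₀ h ▸ hry
  · exact hI₁ h ▸ hxp

section ArgminBy

variable {V α : Type*} [LinearOrder α]

open Classical in
noncomputable def argminBy (κ : V → α) (d : V) (U : Set V) : V :=
  if h : ∃ x ∈ U, ∀ y ∈ U, κ x ≤ κ y then h.choose else d

theorem argminBy_spec [Finite V] (κ : V → α) (d : V) {U : Set V} (hU : U.Nonempty) :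
    argminBy κ d U ∈ U ∧ ∀ y ∈ U, κ (argminBy κ d U) ≤ κ y := by
  have h := Set.exists_min_image U κ U.toFinite hU
  rw [argminBy, dif_pos h]
  exact h.choose_spec

theorem argminBy_eq {κ : V → α} (hκ : Injective κ) (d : V) {U : Set V} {x : V} (hx : x ∈ U)
    (hmin : ∀ y ∈ U, κ x ≤ κ y) : argminBy κ d U = x := by
  have h : ∃ x ∈ U, ∀ y ∈ U, κ x ≤ κ y := ⟨x, hx, hmin⟩
  rw [argminBy, dif_pos h]
  exact hκ (le_antisymm (h.choose_spec.2 x hx) (hmin _ h.choose_spec.1))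

end ArgminBy

/-- A relation on `V` all of whose edges join cyclically consecutive vertices `vertex i`,
`vertex (i + 1)`, with at most one of the two orientations present. -/
structure OrientedCycle (V : Type) where
  n : ℕ
  pos : 0 < n
  vertex : Fin n ≃ V
  Adj : V → V → Prop
  adj_cases : ∀ {u v : Fin n}, Adj (vertex u) (vertex v) →
    v = cycSucc pos u ∨ (u = cycSucc pos v ∧ ¬ Adj (vertex v) (vertex u))

noncomputable section

namespace OrientedCycle

variable {V : Type} (C : OrientedCycle V)

open Classical in
def sign (i : Fin C.n) : ℤ := if C.Adj (C.vertex i) (C.vertex (cycSucc C.pos i)) then 1 else -1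

def level (j : ℕ) : ℤ := ∑ i ∈ range j, C.sign ⟨i % C.n, Nat.mod_lt _ C.pos⟩

/-- The winding number of the cycle. -/
def period : ℤ := C.level C.n

def index (x : V) : ℕ := C.vertex.symm x

def height (x : V) : ℤ := C.level (C.index x)

@[simp] theorem index_vertex (u : Fin C.n) : C.index (C.vertex u) = u := by
  simp [index]

theorem level_succ {j : ℕ} (hj : j < C.n) : C.level (j + 1) = C.level j + C.sign ⟨j, hj⟩ := by
  simp only [level, sum_range_succ, Nat.mod_eq_of_lt hj]

theorem sign_eq_one_or_neg_one (i : Fin C.n) : C.sign i = 1 ∨ C.sign i = -1 := by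
  unfold sign
  split <;> simp

theorem two_dvd_level_sub (j : ℕ) : 2 ∣ C.level j - j := by
  induction j with
  | zero => simp [level]
  | succ j ih =>
    rw [level, sum_range_succ, ← level]
    rcases C.sign_eq_one_or_neg_one ⟨j % C.n, Nat.mod_lt _ C.pos⟩ with h | h <;>
      · rw [h]; push_cast; omega

theorem period_eq :
    C.period = 2 * {i | C.Adj (C.vertex i) (C.vertex (cycSucc C.pos i))}.ncard - C.n := by
  classical
  have hsign : ∀ i, C.sign i =
      2 * (if C.Adj (C.vertex i) (C.vertex (cycSucc C.pos i)) then 1 else 0) - 1 := by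
    intro i
    unfold sign
    split <;> norm_num
  have hset : {i | C.Adj (C.vertex i) (C.vertex (cycSucc C.pos i))} =
      ↑(univ.filter fun i => C.Adj (C.vertex i) (C.vertex (cycSucc C.pos i))) := by
    ext; simp
  rw [period, level, sum_range fun i => C.sign ⟨i % C.n, _⟩]
  simp only [Nat.mod_eq_of_lt (Fin.isLt _), Fin.eta, hsign, sum_sub_distrib, ← mul_sum,
    sum_boole, hset, Set.ncard_coe_finset, sum_const, card_univ, Fintype.card_fin]
  simp

theorem exists_lift_cycSucc (u : Fin C.n) : ∃ k : ℤ,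
    ((cycSucc C.pos u : ℕ) : ℤ) + C.n * k = u + 1 ∧
      C.level (cycSucc C.pos u) + k * C.period = C.level (u + 1) := by
  obtain h | h : (u : ℕ) + 1 < C.n ∨ (u : ℕ) + 1 = C.n := by omega
  · refine ⟨0, ?_, ?_⟩ <;> simp [cycSucc, Nat.mod_eq_of_lt h]
  · refine ⟨1, ?_, ?_⟩ <;> simp [cycSucc, h, period, level]
    exact_mod_cast h.symm

/-- Every edge lifts to an edge between consecutive positions of the universal cover that
raises the height by one. -/
theorem exists_lift_of_adj {x y : V} (h : C.Adj x y) : ∃ k : ℤ,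
    C.height y + k * C.period = C.height x + 1 ∧
      ((C.index y : ℤ) + C.n * k = C.index x + 1 ∨
        (C.index y : ℤ) + C.n * k = C.index x - 1) := by
  obtain ⟨u, rfl⟩ := C.vertex.surjective x
  obtain ⟨v, rfl⟩ := C.vertex.surjective y
  simp only [height, index_vertex]
  rcases C.adj_cases h with rfl | ⟨rfl, hvu⟩
  · obtain ⟨k, hki, hkl⟩ := C.exists_lift_cycSucc u
    have hsign : C.sign u = 1 := if_pos h
    refine ⟨k, ?_, Or.inl hki⟩
    rw [hkl, C.level_succ u.isLt, hsign]
  · obtain ⟨k, hki, hkl⟩ := C.exists_lift_cycSucc v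
    have hsign : C.sign v = -1 := if_neg hvu
    rw [C.level_succ v.isLt, hsign] at hkl
    refine ⟨-k, by linarith, Or.inr (by linarith)⟩

/-- The deck translate `k` such that the `k`-th lift of `x`, at position `index x + n k` and
height `height x + k q`, lies in the height window `[β, β + |q|)`. -/
def copy (β : ℤ) (x : V) : ℤ := -((C.height x - β) / C.period)

def liftHeight (β : ℤ) (x : V) : ℤ := C.height x + C.copy β x * C.period

def liftIndex (β : ℤ) (x : V) : ℤ := C.index x + C.n * C.copy β x

def key (β : ℤ) (x : V) : ℤ ×ₗ ℤ := toLex (C.liftHeight β x, C.liftIndex β x)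

def fold (b : V) (U : Set V) : V := argminBy (C.key (C.height b)) b U

variable {C}

theorem liftHeight_mem_window (hq : C.period ≠ 0) (β : ℤ) (x : V) :
    β ≤ C.liftHeight β x ∧ C.liftHeight β x < β + |C.period| := by
  have h : C.liftHeight β x = β + (C.height x - β) % C.period := by
    rw [Int.emod_def, liftHeight, copy]
    ring
  rw [h]
  exact ⟨by linarith [Int.emod_nonneg (C.height x - β) hq],
    by linarith [Int.emod_lt_abs (C.height x - β) hq]⟩

theorem copy_eq_of_mem_window (hq : C.period ≠ 0) {β k : ℤ} {x : V}
    (h₁ : β ≤ C.height x + k * C.period) (h₂ : C.height x + k * C.period < β + |C.period|) :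
    C.copy β x = k := by
  obtain ⟨hc₁, hc₂⟩ := liftHeight_mem_window hq β x
  have hdiff : (k - C.copy β x) * C.period = C.height x + k * C.period - C.liftHeight β x := by
    rw [liftHeight]; ring
  have hzero : (k - C.copy β x) * C.period = 0 :=
    Int.eq_zero_of_abs_lt_dvd ((abs_dvd _ _).2 (dvd_mul_left _ _))
      (by rw [hdiff, abs_lt]; constructor <;> linarith)
  have := (mul_eq_zero.1 hzero).resolve_right hq
  omega

theorem copy_add_mul (hq : C.period ≠ 0) (β m : ℤ) (x : V) :
    C.copy (β + m * C.period) x = C.copy β x + m := by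
  obtain ⟨h₁, h₂⟩ := liftHeight_mem_window hq β x
  rw [liftHeight] at h₁ h₂
  exact copy_eq_of_mem_window hq (by linarith) (by linarith)

theorem key_add_mul_le_iff (hq : C.period ≠ 0) (β m : ℤ) (x y : V) :
    C.key (β + m * C.period) x ≤ C.key (β + m * C.period) y ↔ C.key β x ≤ C.key β y := by
  simp only [key, liftHeight, liftIndex, copy_add_mul hq, Prod.Lex.toLex_le_toLex]
  constructor <;> intro h <;> rcases h with h | ⟨h₁, h₂⟩
  all_goals first
    | exact Or.inl (by linarith)
    | exact Or.inr ⟨by linarith, by linarith⟩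

theorem lift_of_adj (hq : C.period ≠ 0) (β : ℤ) {x y : V} (h : C.Adj x y) :
    C.liftHeight (β + 1) y = C.liftHeight β x + 1 ∧
      (C.liftIndex (β + 1) y = C.liftIndex β x + 1 ∨
        C.liftIndex (β + 1) y = C.liftIndex β x - 1) := by
  obtain ⟨k, hkh, hki⟩ := C.exists_lift_of_adj h
  obtain ⟨h₁, h₂⟩ := liftHeight_mem_window hq β x
  rw [liftHeight] at h₁ h₂
  have hcopy : C.copy (β + 1) y = C.copy β x + k :=
    copy_eq_of_mem_window hq (by linarith) (by linarith)
  simp only [liftHeight, liftIndex, hcopy]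
  refine ⟨by linarith, ?_⟩
  rcases hki with hki | hki
  · exact Or.inl (by linear_combination hki)
  · exact Or.inr (by linear_combination hki)

theorem liftIndex_injective (β : ℤ) : Injective (C.liftIndex β) := by
  intro x y h
  have hmod : ∀ z, C.liftIndex β z % C.n = C.index z := fun z => by
    rw [liftIndex, Int.add_mul_emod_self_left]
    exact Int.emod_eq_of_lt (by positivity) (by exact_mod_cast (C.vertex.symm z).isLt)
  have hxy : C.index x = C.index y := by
    have := hmod x
    rw [h, hmod y] at this
    exact_mod_cast this.symm
  exact C.vertex.symm.injective (Fin.ext hxy)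

theorem key_injective (β : ℤ) : Injective (C.key β) := fun _ _ h =>
  liftIndex_injective β (congrArg (fun p => (ofLex p).2) h)

theorem two_dvd_liftHeight_sub_liftIndex (β : ℤ) (x : V) :
    2 ∣ C.liftHeight β x - C.liftIndex β x := by
  have hrw : C.liftHeight β x - C.liftIndex β x =
      (C.level (C.index x) - C.index x) + C.copy β x * (C.level C.n - C.n) := by
    simp only [liftHeight, liftIndex, height, period]
    ring
  rw [hrw]
  exact (C.two_dvd_level_sub _).add (dvd_mul_of_dvd_right (C.two_dvd_level_sub _) _)

theorem fold_singleton (b c : V) : C.fold b {c} = c :=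
  argminBy_eq (key_injective _) b rfl (by simp)

theorem adj_fold (hq : C.period ≠ 0) {U W : Set V} (hU : U.Nonempty)
    (hUW : ∀ x ∈ U, ∃ y ∈ W, C.Adj x y) (hWU : ∀ y ∈ W, ∃ x ∈ U, C.Adj x y)
    {b b' : V} (hb : C.Adj b b') : C.Adj (C.fold b U) (C.fold b' W) := by
  have := Finite.of_equiv _ C.vertex
  have hW : W.Nonempty := let ⟨x, hx⟩ := hU; let ⟨y, hy, _⟩ := hUW x hx; ⟨y, hy⟩
  obtain ⟨hxU, hxmin⟩ := argminBy_spec (C.key (C.height b)) b hU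
  obtain ⟨hyW, hymin⟩ := argminBy_spec (C.key (C.height b')) b' hW
  rw [← fold] at hxU hxmin hyW hymin
  generalize C.fold b U = x at hxU hxmin ⊢
  generalize C.fold b' W = y at hyW hymin ⊢
  obtain ⟨p, hpW, hxp⟩ := hUW _ hxU
  obtain ⟨r, hrU, hry⟩ := hWU _ hyW
  -- the heights of `b` and `b'` differ by one modulo the period
  obtain ⟨k, hk, -⟩ := C.exists_lift_of_adj hb
  have hb' : C.height b' = C.height b + 1 + -k * C.period := by linarith
  rw [hb'] at hymin
  exact adj_of_lex_minimal (liftIndex_injective _) (liftIndex_injective _)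
    (two_dvd_liftHeight_sub_liftIndex _) (fun _ _ => lift_of_adj hq _) hxp hry
    (hxmin r hrU) ((key_add_mul_le_iff hq _ _ _ _).1 (hymin p hpW))

end OrientedCycle

end

namespace OrientedCycle

def ofOrientation (D : RelStruct graphSig) (n : ℕ) (hn : 0 < n) (e : Fin n ≃ D.carrier)
    (hxor : ∀ i : Fin n,
      Xor (![e i, e (cycSucc hn i)] ∈ D.rel ()) (![e (cycSucc hn i), e i] ∈ D.rel ()))
    (hno : ∀ t ∈ D.rel (), ∃ i : Fin n,
      t = ![e i, e (cycSucc hn i)] ∨ t = ![e (cycSucc hn i), e i]) :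
    OrientedCycle D.carrier where
  n := n
  pos := hn
  vertex := e
  Adj u v := ![u, v] ∈ D.rel ()
  adj_cases {u v} h := by
    obtain ⟨i, hi | hi⟩ := hno _ h
    · have hu : u = i := e.injective (by simpa using congrFun hi 0)
      have hv : v = cycSucc hn i := e.injective (by simpa using congrFun hi 1)
      exact Or.inl (hu ▸ hv)
    · have hu : u = cycSucc hn i := e.injective (by simpa using congrFun hi 0)
      have hv : v = i := e.injective (by simpa using congrFun hi 1)
      subst hu hv
      refine Or.inr ⟨rfl, fun hvu => ?_⟩
      rcases hxor v with ⟨-, hnot⟩ | ⟨-, hnot⟩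
      · exact hnot h
      · exact hnot hvu

theorem isPeekFold_fold {D : RelStruct graphSig} (C : OrientedCycle D.carrier)
    (hC : ∀ t : Fin 2 → D.carrier, C.Adj (t 0) (t 1) ↔ t ∈ D.rel ()) (hq : C.period ≠ 0) :
    IsPeekFold D C.fold := by
  refine ⟨C.fold_singleton, fun R t ht S hS hSR => (hC _).1 ?_⟩
  have hadj : ∀ s ∈ S, C.Adj (s 0) (s 1) := fun s hs => (hC s).2 (hSR hs)
  exact C.adj_fold hq (U := (fun s => s 0) '' S) (W := (fun s => s 1) '' S) (hS.image _)
    (by rintro _ ⟨s, hs, rfl⟩; exact ⟨s 1, ⟨s, hs, rfl⟩, hadj s hs⟩)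
    (by rintro _ ⟨s, hs, rfl⟩; exact ⟨s 0, ⟨s, hs, rfl⟩, hadj s hs⟩)
    ((hC t).2 ht)

end OrientedCycle

theorem PAC_decides_unbalanced_cycle_general (D : RelStruct graphSig)
    (n : ℕ) (hn : 0 < n) (e : Fin n ≃ D.carrier)
    (hxor : ∀ i : Fin n,
      Xor' (![e i, e (cycSucc hn i)] ∈ D.rel ()) (![e (cycSucc hn i), e i] ∈ D.rel ()))
    (hno : ∀ t ∈ D.rel (), ∃ i : Fin n,
      t = ![e i, e (cycSucc hn i)] ∨ t = ![e (cycSucc hn i), e i])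
    (hunbal : 2 * {i : Fin n | ![e i, e (cycSucc hn i)] ∈ D.rel ()}.ncard ≠ n) :
    PACdecides D := by
  set C := OrientedCycle.ofOrientation D n hn e hxor hno
  have hq : C.period ≠ 0 := by
    rw [C.period_eq]
    exact sub_ne_zero.2 (by exact_mod_cast hunbal)
  intro A _ hpacc
  rcases isEmpty_or_nonempty A.carrier with _ | _
  · exact ⟨isEmptyElim, fun _ t _ => isEmptyElim (t 0)⟩
  · have hC : ∀ t : Fin 2 → D.carrier, C.Adj (t 0) (t 1) ↔ t ∈ D.rel () := fun t => by
      change ![t 0, t 1] ∈ D.rel () ↔ _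
      rw [show ![t 0, t 1] = t from List.ofFn_inj.mp rfl]
    exact (C.isPeekFold_fold hC hq).homTo hpacc

/-- If `D` is an unbalanced orientation of a cycle, then PAC decides
`CSP(D)`. The universe of `D` is enumerated (cyclically) as `e 0, …, e (n-1)`; for each
`i` exactly one of the pairs `(e i, e (i+1))`, `(e (i+1), e i)` is an edge, there are no
other edges, and the number of forward edges is distinct from `n / 2`. -/
theorem PAC_decides_unbalanced_cycle (D : RelStruct graphSig) (hfin : Finite D.carrier)
    (n : ℕ) (hn : 0 < n) (e : Fin n ≃ D.carrier)
    (hxor : ∀ i : Fin n,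
      Xor' (![e i, e (cycSucc hn i)] ∈ D.rel ()) (![e (cycSucc hn i), e i] ∈ D.rel ()))
    (hno : ∀ t ∈ D.rel (), ∃ i : Fin n,
      t = ![e i, e (cycSucc hn i)] ∨ t = ![e (cycSucc hn i), e i])
    (hunbal : 2 * {i : Fin n | ![e i, e (cycSucc hn i)] ∈ D.rel ()}.ncard ≠ n) :
    PACdecides D :=
  PAC_decides_unbalanced_cycle_general D n hn e hxor hno hunbal
end

section
/- PAC decides CSP((ℚ; ≤, ≠)), where ≤ and ≠ are the usual order and disequality relations on the rational numbers: for every finite structure A over the signature {≤, ≠}, if (A, (ℚ; ≤, ≠)) has the PACC then A → (ℚ; ≤, ≠). -/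
/-!
Let `x ⊑ y` mean that `y` is reachable from `x` along `≤`-constraints of `A`. If
`h : A → ℘(ℚ)` is a homomorphism with `h a = {q}`, arc consistency of the `≤`-constraints forces
every value of `h` at an element above `a` to be `≥ q` and at an element below `a` to be `≤ q`, so
`h` is constantly `{q}` on the strongly connected component of `a`. Peeking at `t 0` for a
`≠`-constraint `t` therefore shows that `t 0` and `t 1` lie in different components. Hence a
rational-valued linear extension of the preorder `⊑` whose fibres are exactly the components
solves `A`; it exists because the countable partial order of components embeds into `ℚ`.
-/

theorem exists_monotone_rat_antisymmRel_of_eq {α : Type*} [Preorder α] [Countable α] :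
    ∃ f : α → ℚ, Monotone f ∧ ∀ x y, f x = f y → AntisymmRel (· ≤ ·) x y := by
  have : Countable (LinearExtension (Antisymmetrization α (· ≤ ·))) :=
    inferInstanceAs (Countable (Quotient (AntisymmRel.setoid α (· ≤ ·))))
  obtain ⟨g⟩ := Order.embedding_from_countable_to_dense
    (α := LinearExtension (Antisymmetrization α (· ≤ ·))) (β := ℚ)
  refine ⟨fun x => g (toLinearExtension (toAntisymmetrization (· ≤ ·) x)),
    fun x y hxy => g.monotone (toLinearExtension.monotone (toAntisymmetrization_mono hxy)),
    fun x y hfxy => ?_⟩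
  have hxy : toAntisymmetrization (· ≤ ·) x = toAntisymmetrization (· ≤ ·) y := g.injective hfxy
  exact ⟨(toAntisymmetrization_le_toAntisymmetrization_iff).1 hxy.le,
    (toAntisymmetrization_le_toAntisymmetrization_iff).1 hxy.ge⟩

theorem Relation.exists_rat_rank_reflTransGen {α : Type*} [Countable α] (r : α → α → Prop) :
    ∃ f : α → ℚ, (∀ x y, r x y → f x ≤ f y) ∧
      ∀ x y, f x = f y → ReflTransGen r x y ∧ ReflTransGen r y x := by
  let _ : Preorder α :=
    { le := ReflTransGen r, le_refl := fun _ => .refl, le_trans := fun _ _ _ => .trans }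
  obtain ⟨f, hmono, hfib⟩ := exists_monotone_rat_antisymmRel_of_eq (α := α)
  exact ⟨f, fun x y hxy => hmono (ReflTransGen.single hxy), hfib⟩

theorem PowStruct.exists_mem_rel {σ : RelSig} {B : RelStruct σ} {R : σ.symbols}
    {t : Fin (σ.arity R) → (PowStruct B).carrier} (ht : t ∈ (PowStruct B).rel R)
    (j : Fin (σ.arity R)) {b : B.carrier} (hb : b ∈ (t j).val) :
    ∃ s ∈ B.rel R, s j = b ∧ ∀ i, s i ∈ (t i).val := by
  obtain ⟨S, -, hSR, hproj⟩ := ht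
  rw [hproj j] at hb
  obtain ⟨s, hs, rfl⟩ := hb
  exact ⟨s, hSR hs, rfl, fun i => hproj i ▸ ⟨s, hs, rfl⟩⟩

namespace PointAlgebra

def LeEdge (A : RelStruct sig2) (x y : A.carrier) : Prop := ∃ t ∈ A.rel 0, t 0 = x ∧ t 1 = y

variable {A : RelStruct sig2}

theorem forall_exists_le_of_reflTransGen {h : A.carrier → (PowStruct ratStruct).carrier}
    (hh : IsHom A (PowStruct ratStruct) h) {x y : A.carrier}
    (hxy : Relation.ReflTransGen (LeEdge A) x y) :
    (∀ v ∈ (h y).val, ∃ u ∈ (h x).val, u ≤ v) ∧ (∀ u ∈ (h x).val, ∃ v ∈ (h y).val, u ≤ v) := by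
  induction hxy with
  | refl => exact ⟨fun v hv => ⟨v, hv, le_rfl⟩, fun u hu => ⟨u, hu, le_rfl⟩⟩
  | tail _ hyz ih =>
    obtain ⟨t, ht, rfl, rfl⟩ := hyz
    refine ⟨fun v hv => ?_, fun u hu => ?_⟩
    · obtain ⟨s, hs, rfl, hst⟩ := PowStruct.exists_mem_rel (hh 0 t ht) 1 hv
      obtain ⟨u, hu, hus⟩ := ih.1 _ (hst 0)
      exact ⟨u, hu, hus.trans hs⟩
    · obtain ⟨w, hw, huw⟩ := ih.2 u hu
      obtain ⟨s, hs, rfl, hst⟩ := PowStruct.exists_mem_rel (hh 0 t ht) 0 hw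
      exact ⟨s 1, hst 1, huw.trans hs⟩

theorem val_eq_singleton_of_reflTransGen {h : A.carrier → (PowStruct ratStruct).carrier}
    (hh : IsHom A (PowStruct ratStruct) h) {x y : A.carrier} {q : ℚ} (hx : (h x).val = {q})
    (hxy : Relation.ReflTransGen (LeEdge A) x y) (hyx : Relation.ReflTransGen (LeEdge A) y x) :
    (h y).val = {q} := by
  refine (h y).property.subset_singleton_iff.1 fun v hv => le_antisymm ?_ ?_
  · obtain ⟨w, hw, hvw⟩ := (forall_exists_le_of_reflTransGen hh hyx).2 v hv
    rwa [hx, Set.mem_singleton_iff.1 hw] at *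
  · obtain ⟨u, hu, huv⟩ := (forall_exists_le_of_reflTransGen hh hxy).1 v hv
    rwa [hx, Set.mem_singleton_iff.1 hu] at *

theorem false_of_ne_constraint_of_reflTransGen (hP : PACC A ratStruct) {t : Fin 2 → A.carrier}
    (ht : t ∈ A.rel 1) (h01 : Relation.ReflTransGen (LeEdge A) (t 0) (t 1))
    (h10 : Relation.ReflTransGen (LeEdge A) (t 1) (t 0)) : False := by
  obtain ⟨h, hh, q, hq⟩ := hP (t 0)
  have hq' := val_eq_singleton_of_reflTransGen hh hq h01 h10
  obtain ⟨s, hs, hs0, hst⟩ := PowStruct.exists_mem_rel (hh 1 t ht) 0 (hq ▸ Set.mem_singleton q)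
  have hs1 : s 1 ∈ (h (t 1)).val := hst 1
  rw [hq'] at hs1
  exact hs (hs0.trans hs1.symm)

end PointAlgebra

/-- PAC decides `CSP((ℚ; ≤, ≠))`. -/
theorem PAC_decides_pointAlgebra : PACdecides ratStruct := by
  intro A _ hP
  obtain ⟨f, hle, hfib⟩ := Relation.exists_rat_rank_reflTransGen (PointAlgebra.LeEdge A)
  refine ⟨f, fun R t ht => ?_⟩
  match R with
  | ⟨0, _⟩ => exact hle _ _ ⟨t, ht, rfl, rfl⟩
  | ⟨1, _⟩ => exact fun heq =>
      PointAlgebra.false_of_ne_constraint_of_reflTransGen hP ht (hfib _ _ heq).1 (hfib _ _ heq).2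
end

section
/- Let B = (ℚ; ≤, ≠) and let A be a finite structure over the signature {≤, ≠}. Suppose there exist elements a₁,…,a_k ∈ A such that (aᵢ, aᵢ₊₁) ∈ ≤^A for all 1 ≤ i < k, (a_k, a₁) ∈ ≤^A, and (a_p, a_q) ∈ ≠^A for some p, q ∈ {1,…,k}. Then there is no homomorphism h from A to the power structure ℘(B) such that h(a₁) is a singleton. -/
/-! A homomorphism `h` into `℘(ℚ; ≤, ≠)` sends each `≤`-edge `(x, y)` to sets where every element
of `h x` lies below some element of `h y` and every element of `h y` above some element of `h x`.
Going forward along the cycle from any `aᵢ` back to `a₁` bounds `h aᵢ` above by the singleton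
`h a₁ = {b}`, and going backward from `aᵢ` to `a₁` bounds it below, so `h aᵢ = {b}` on the whole
cycle. The `≠`-constraint then needs two distinct elements of `{b}`. -/

theorem PowStruct.exists_mem_rel_of_mem {σ : RelSig} {B : RelStruct σ} {R : σ.symbols}
    {t : Fin (σ.arity R) → (PowStruct B).carrier} (ht : t ∈ (PowStruct B).rel R)
    {i : Fin (σ.arity R)} {x : B.carrier} (hx : x ∈ (t i).val) :
    ∃ s ∈ B.rel R, s i = x ∧ ∀ j, s j ∈ (t j).val := by
  obtain ⟨S, -, hSR, hproj⟩ := ht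
  rw [hproj] at hx
  obtain ⟨s, hs, rfl⟩ := hx
  exact ⟨s, hSR hs, rfl, fun j => hproj j ▸ ⟨s, hs, rfl⟩⟩

namespace IsHom

variable {A : RelStruct sig2} {h : A.carrier → (PowStruct ratStruct).carrier}
  {x y : A.carrier}

theorem exists_ge_of_le (hh : IsHom A (PowStruct ratStruct) h) (hxy : ![x, y] ∈ A.rel 0)
    {r : ℚ} (hr : r ∈ (h x).val) : ∃ s ∈ (h y).val, r ≤ s := by
  obtain ⟨t, ht, rfl, hmem⟩ := PowStruct.exists_mem_rel_of_mem (hh 0 _ hxy) (i := 0) hr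
  exact ⟨t 1, hmem 1, ht⟩

theorem exists_le_of_le (hh : IsHom A (PowStruct ratStruct) h) (hxy : ![x, y] ∈ A.rel 0)
    {s : ℚ} (hs : s ∈ (h y).val) : ∃ r ∈ (h x).val, r ≤ s := by
  obtain ⟨t, ht, rfl, hmem⟩ := PowStruct.exists_mem_rel_of_mem (hh 0 _ hxy) (i := 1) hs
  exact ⟨t 0, hmem 0, ht⟩

theorem exists_ne_of_ne (hh : IsHom A (PowStruct ratStruct) h) (hxy : ![x, y] ∈ A.rel 1) :
    ∃ r ∈ (h x).val, ∃ s ∈ (h y).val, r ≠ s := by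
  obtain ⟨r, hr⟩ := (h x).2
  obtain ⟨t, ht, rfl, hmem⟩ := PowStruct.exists_mem_rel_of_mem (hh 1 _ hxy) (i := 0) hr
  exact ⟨t 0, hmem 0, t 1, hmem 1, ht⟩

end IsHom

namespace Fin

variable {α : Type*} [Preorder α] {n : ℕ} {X : Fin (n + 1) → Set α} {b : α}

theorem forall_mem_le_of_exists_ge_succ
    (hstep : ∀ i : Fin n, ∀ x ∈ X i.castSucc, ∃ y ∈ X i.succ, x ≤ y)
    (hlast : ∀ y ∈ X (last n), y ≤ b) (i : Fin (n + 1)) : ∀ x ∈ X i, x ≤ b := by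
  induction i using reverseInduction with
  | last => exact hlast
  | cast i ih =>
    intro x hx
    obtain ⟨y, hy, hxy⟩ := hstep i x hx
    exact hxy.trans (ih y hy)

theorem forall_le_mem_of_exists_le_castSucc
    (hstep : ∀ i : Fin n, ∀ y ∈ X i.succ, ∃ x ∈ X i.castSucc, x ≤ y)
    (hzero : ∀ x ∈ X 0, b ≤ x) (i : Fin (n + 1)) : ∀ y ∈ X i, b ≤ y := by
  induction i using induction with
  | zero => exact hzero
  | succ i ih =>
    intro y hy
    obtain ⟨x, hx, hxy⟩ := hstep i y hy
    exact (ih x hx).trans hxy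

end Fin

theorem no_singleton_hom_of_le_cycle_with_neq_general (A : RelStruct sig2) (k : ℕ)
    (hk : 0 < k) (a : Fin k → A.carrier)
    (hchain : ∀ i : Fin k, (hi : i.val + 1 < k) → ![a i, a ⟨i.val + 1, hi⟩] ∈ A.rel 0)
    (hcyc : ![a ⟨k - 1, Nat.sub_lt hk Nat.one_pos⟩, a ⟨0, hk⟩] ∈ A.rel 0)
    (hne : ∃ p q : Fin k, ![a p, a q] ∈ A.rel 1) :
    ¬ ∃ h : A.carrier → (PowStruct ratStruct).carrier,
      IsHom A (PowStruct ratStruct) h ∧ ∃ b, (h (a ⟨0, hk⟩)).val = {b} := by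
  rintro ⟨h, hh, b, hb⟩
  obtain ⟨n, rfl⟩ := Nat.exists_eq_succ_of_ne_zero hk.ne'
  have hedge (i : Fin n) : ![a i.castSucc, a i.succ] ∈ A.rel 0 := hchain i.castSucc i.succ.isLt
  have hupper : ∀ i, ∀ r ∈ (h (a i)).val, r ≤ b :=
    Fin.forall_mem_le_of_exists_ge_succ (X := fun i => (h (a i)).val)
      (fun i _ => hh.exists_ge_of_le (hedge i)) fun r hr => by
        obtain ⟨s, hs, hrs⟩ := hh.exists_ge_of_le hcyc hr
        rw [hb, Set.mem_singleton_iff] at hs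
        exact hs ▸ hrs
  have hlower : ∀ i, ∀ r ∈ (h (a i)).val, b ≤ r :=
    Fin.forall_le_mem_of_exists_le_castSucc (X := fun i => (h (a i)).val)
      (fun i _ => hh.exists_le_of_le (hedge i)) fun r hr => by
        rw [show (h (a 0)).val = {b} from hb, Set.mem_singleton_iff] at hr
        exact hr.ge
  have hsingleton (i : Fin (n + 1)) {r : ℚ} (hr : r ∈ (h (a i)).val) : r = b :=
    le_antisymm (hupper i r hr) (hlower i r hr)
  obtain ⟨p, q, hpq⟩ := hne
  obtain ⟨r, hr, s, hs, hrs⟩ := hh.exists_ne_of_ne hpq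
  exact hrs ((hsingleton p hr).trans (hsingleton q hs).symm)

/-- If a finite structure `A` over the signature `{≤, ≠}` contains elements
`a 0, …, a (k-1)` forming a `≤`-cycle with a `≠`-constraint between two of its members,
then there is no homomorphism `h` from `A` to `℘((ℚ; ≤, ≠))` with `h (a 0)` a singleton. -/
theorem no_singleton_hom_of_le_cycle_with_neq (A : RelStruct sig2) (hfin : Finite A.carrier)
    (k : ℕ) (hk : 0 < k) (a : Fin k → A.carrier)
    (hchain : ∀ i : Fin k, (hi : i.val + 1 < k) → ![a i, a ⟨i.val + 1, hi⟩] ∈ A.rel 0)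
    (hcyc : ![a ⟨k - 1, Nat.sub_lt hk Nat.one_pos⟩, a ⟨0, hk⟩] ∈ A.rel 0)
    (hne : ∃ p q : Fin k, ![a p, a q] ∈ A.rel 1) :
    ¬ ∃ h : A.carrier → (PowStruct ratStruct).carrier,
      IsHom A (PowStruct ratStruct) h ∧ ∃ b, (h (a ⟨0, hk⟩)).val = {b} :=
  no_singleton_hom_of_le_cycle_with_neq_general A k hk a hchain hcyc hne
end
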